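/- arXiv:2406.17089 — 2 statements merged into one kernel-verified Lean document; each statement's English description precedes it below -/
import Mathlib

section
/- Let G be a connected graph of order n ≥ 2 and size m. Then the signless Laplacian spectral radius satisfies q(G) ≤ 2m/(n−1) + n − 2, with equality if and only if G = K_n or G = K_{1,n−1}. -/
open SimpleGraph

/-- The signless Laplacian matrix `Q(G) = D(G) + A(G)` of a graph. -/
noncomputable def signlessLaplacian {V : Type*} [Fintype V] [DecidableEq V]
    (G : SimpleGraph V) [DecidableRel G.Adj] : Matrix V V ℝ :=
  Matrix.diagonal (fun v => (G.degree v : ℝ)) + G.adjMatrix ℝ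

/-- The signless Laplacian spectral radius: the largest eigenvalue of `Q(G)`. -/
noncomputable def qSpectralRadius {V : Type*} [Fintype V] [DecidableEq V]
    (G : SimpleGraph V) [DecidableRel G.Adj] : ℝ :=
  sSup (spectrum ℝ (signlessLaplacian G))

/-!
Let `d` be the (positive) degree vector, so `(Q d)_v = d_v² + ∑_{w ~ v} d_w`. The neighbour sum is
at most `d_v (n - 1)`, and, as every non-neighbour of `v` has degree at least one, also at most
`2m - (n - 1)`; either bound gives `(Q d)_v ≤ c d_v` for `c = 2m/(n-1) + n - 2`. Comparing an
eigenvector `x` with `d` at a vertex maximising `|x_v| / d_v` shows that every eigenvalue is at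
most `c`, and on a connected graph that `c` is an eigenvalue only if `Q d = c d`. Equality at `v`
forces all non-neighbours of `v` to be leaves and `v` to be universal or `(n-1)(d_v+1) = 2m`, and
only `K_n` and the star satisfy this at every vertex.
-/

open Finset

theorem exists_abs_le_mul_of_pos {ι : Type*} [Finite ι] {x y : ι → ℝ} (hy : ∀ i, 0 < y i)
    (hx : x ≠ 0) :
    ∃ t > 0, (∀ j, |x j| ≤ t * y j) ∧ ∃ i, |x i| = t * y i := by
  obtain ⟨j, hj⟩ := Function.ne_iff.mp hx
  have : Nonempty ι := ⟨j⟩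
  obtain ⟨i, hi⟩ := Finite.exists_max fun i => |x i| / y i
  refine ⟨|x i| / y i, (div_pos (abs_pos.2 hj) (hy j)).trans_le (hi j), fun k => ?_, i, ?_⟩
  · rw [← div_le_iff₀ (hy k)]; exact hi k
  · rw [div_mul_cancel₀ _ (hy i).ne']

namespace Matrix

theorem mem_spectrum_iff_exists_mulVec_eq_smul {ι K : Type*} [Fintype ι] [DecidableEq ι] [Field K]
    {M : Matrix ι ι K} {μ : K} : μ ∈ spectrum K M ↔ ∃ x ≠ 0, M *ᵥ x = μ • x := by
  rw [← spectrum_toLin', ← Module.End.hasEigenvalue_iff_mem_spectrum]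
  constructor
  · intro h
    obtain ⟨x, hx, hx0⟩ := h.exists_hasEigenvector
    exact ⟨x, hx0, Module.End.mem_eigenspace_iff.mp hx⟩
  · rintro ⟨x, hx0, hx⟩
    exact Module.End.hasEigenvalue_of_hasEigenvector ⟨Module.End.mem_eigenspace_iff.mpr hx, hx0⟩

variable {ι : Type*} [Fintype ι] {M : Matrix ι ι ℝ} {x y : ι → ℝ} {c μ : ℝ}

theorem abs_mul_abs_le_sum_mul_abs (hM : ∀ i j, 0 ≤ M i j) (hx : M *ᵥ x = μ • x) (i : ι) :
    |μ| * |x i| ≤ ∑ j, M i j * |x j| := calc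
  |μ| * |x i| = |∑ j, M i j * x j| := by
    rw [← abs_mul, ← smul_eq_mul, ← Pi.smul_apply, ← hx]; rfl
  _ ≤ ∑ j, |M i j * x j| := abs_sum_le_sum_abs _ _
  _ = ∑ j, M i j * |x j| := by simp only [abs_mul, abs_of_nonneg (hM i _)]

theorem sum_mul_mul_eq_mul_mulVec (t : ℝ) (i : ι) :
    ∑ j, M i j * (t * y j) = t * (M *ᵥ y) i := by
  simp only [mulVec, dotProduct, mul_sum, mul_left_comm]

theorem sum_mul_le_mul_mulVec (hM : ∀ i j, 0 ≤ M i j) {t : ℝ} (hxy : ∀ j, |x j| ≤ t * y j)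
    (i : ι) : ∑ j, M i j * |x j| ≤ t * (M *ᵥ y) i :=
  sum_mul_mul_eq_mul_mulVec (M := M) t i ▸
    sum_le_sum fun j _ => mul_le_mul_of_nonneg_left (hxy j) (hM i j)

theorem abs_le_of_mulVec_le_smul (hM : ∀ i j, 0 ≤ M i j) (hy : ∀ i, 0 < y i)
    (hMy : M *ᵥ y ≤ c • y) (hx0 : x ≠ 0) (hx : M *ᵥ x = μ • x) : |μ| ≤ c := by
  obtain ⟨t, ht, hxy, i, hi⟩ := exists_abs_le_mul_of_pos hy hx0
  refine le_of_mul_le_mul_right ?_ (mul_pos ht (hy i))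
  calc |μ| * (t * y i) = |μ| * |x i| := by rw [hi]
    _ ≤ t * (M *ᵥ y) i :=
      (abs_mul_abs_le_sum_mul_abs hM hx i).trans (sum_mul_le_mul_mulVec hM hxy i)
    _ ≤ t * (c * y i) := mul_le_mul_of_nonneg_left (hMy i) ht.le
    _ = c * (t * y i) := mul_left_comm _ _ _

theorem mulVec_eq_smul_of_mulVec_le_smul (hM : ∀ i j, 0 ≤ M i j) {G : SimpleGraph ι}
    (hG : G.Connected) (hMG : ∀ i j, G.Adj i j → 0 < M i j) (hy : ∀ i, 0 < y i)
    (hMy : M *ᵥ y ≤ c • y) (hx0 : x ≠ 0) (hx : M *ᵥ x = c • x) : M *ᵥ y = c • y := by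
  obtain ⟨t, ht, hxy, i₀, hi₀⟩ := exists_abs_le_mul_of_pos hy hx0
  -- At a vertex where `|x i| = t * y i` the chain of `abs_le_of_mulVec_le_smul` is tight.
  have extremal : ∀ i, |x i| = t * y i →
      (M *ᵥ y) i = c * y i ∧ ∀ j, G.Adj i j → |x j| = t * y j := by
    intro i hi
    have h₁ := abs_mul_abs_le_sum_mul_abs hM hx i
    have h₂ := sum_mul_le_mul_mulVec hM hxy i
    have h₃ : t * (M *ᵥ y) i ≤ t * (c * y i) := mul_le_mul_of_nonneg_left (hMy i) ht.le
    have h₄ : t * (c * y i) ≤ |c| * |x i| := by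
      rw [hi, mul_left_comm]
      exact mul_le_mul_of_nonneg_right (le_abs_self c) (mul_pos ht (hy i)).le
    refine ⟨(mul_right_inj' ht.ne').mp (by linarith), fun j hij => ?_⟩
    have hsum : ∑ j, M i j * |x j| = ∑ j, M i j * (t * y j) := by
      refine le_antisymm (sum_le_sum fun j _ => mul_le_mul_of_nonneg_left (hxy j) (hM i j)) ?_
      rw [sum_mul_mul_eq_mul_mulVec]
      linarith
    have := (sum_eq_sum_iff_of_le fun j _ =>
      mul_le_mul_of_nonneg_left (hxy j) (hM i j)).mp hsum j (mem_univ j)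
    exact mul_left_cancel₀ (hMG i j hij).ne' this
  have hall : ∀ j, |x j| = t * y j := fun j => by
    obtain ⟨p⟩ := hG.preconnected i₀ j
    induction p with
    | nil => exact hi₀
    | cons h _ ih => exact ih ((extremal _ hi₀).2 _ h)
  funext i
  exact (extremal i (hall i)).1

end Matrix

open Matrix

section SignlessLaplacian

variable {V : Type*} [Fintype V] [DecidableEq V] {G : SimpleGraph V} [DecidableRel G.Adj]

theorem signlessLaplacian_apply (v w : V) : signlessLaplacian G v w =
    (if v = w then (G.degree v : ℝ) else 0) + if G.Adj v w then 1 else 0 := by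
  simp [signlessLaplacian, diagonal_apply]

theorem signlessLaplacian_nonneg (v w : V) : 0 ≤ signlessLaplacian G v w := by
  rw [signlessLaplacian_apply]; positivity

theorem signlessLaplacian_pos_of_adj {v w : V} (h : G.Adj v w) :
    0 < signlessLaplacian G v w := by
  simp [signlessLaplacian_apply, h, G.ne_of_adj h]

theorem signlessLaplacian_mulVec_apply (x : V → ℝ) (v : V) :
    (signlessLaplacian G *ᵥ x) v = G.degree v * x v + ∑ w ∈ G.neighborFinset v, x w := by
  simp [signlessLaplacian, add_mulVec, mulVec_diagonal]

theorem isHermitian_signlessLaplacian : (signlessLaplacian G).IsHermitian :=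
  (isHermitian_diagonal _).add (by
    rw [IsHermitian, conjTranspose_eq_transpose_of_trivial]; exact G.isSymm_adjMatrix)

theorem spectrum_signlessLaplacian_nonempty [Nonempty V] :
    (spectrum ℝ (signlessLaplacian G)).Nonempty :=
  ⟨_, isHermitian_signlessLaplacian.eigenvalues_mem_spectrum_real (Classical.arbitrary V)⟩

theorem qSpectralRadius_le_of_mulVec_le [Nonempty V] {y : V → ℝ} {c : ℝ} (hy : ∀ v, 0 < y v)
    (hQy : signlessLaplacian G *ᵥ y ≤ c • y) : qSpectralRadius G ≤ c :=
  csSup_le spectrum_signlessLaplacian_nonempty fun μ hμ => by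
    obtain ⟨x, hx0, hx⟩ := mem_spectrum_iff_exists_mulVec_eq_smul.mp hμ
    exact (le_abs_self μ).trans (abs_le_of_mulVec_le_smul signlessLaplacian_nonneg hy hQy hx0 hx)

theorem qSpectralRadius_eq_iff (hG : G.Connected) {y : V → ℝ} {c : ℝ} (hy : ∀ v, 0 < y v)
    (hQy : signlessLaplacian G *ᵥ y ≤ c • y) :
    qSpectralRadius G = c ↔ signlessLaplacian G *ᵥ y = c • y := by
  have := hG.nonempty
  constructor
  · intro hq
    have hc : c ∈ spectrum ℝ (signlessLaplacian G) :=
      hq ▸ spectrum_signlessLaplacian_nonempty.csSup_mem (finite_spectrum _)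
    obtain ⟨x, hx0, hx⟩ := mem_spectrum_iff_exists_mulVec_eq_smul.mp hc
    exact mulVec_eq_smul_of_mulVec_le_smul signlessLaplacian_nonneg hG
      (fun _ _ => signlessLaplacian_pos_of_adj) hy hQy hx0 hx
  · intro h
    have hy0 : y ≠ 0 := Function.ne_iff.mpr ⟨Classical.arbitrary V, (hy _).ne'⟩
    exact (qSpectralRadius_le_of_mulVec_le hy hQy).antisymm (le_csSup (finite_spectrum _).bddAbove
      (mem_spectrum_iff_exists_mulVec_eq_smul.mpr ⟨y, hy0, h⟩))

end SignlessLaplacian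

section RowBound

-- Read `N = n - 1`, `d = d_v`, `S` and `R` the degree sums over the neighbours and the
-- non-neighbours of `v`, and `M = 2m`.
variable {N d S R M c : ℝ}

theorem mul_self_add_le_of_add_add_eq (hN : 0 < N) (hd : 0 ≤ d) (hdN : d ≤ N) (hS : S ≤ d * N)
    (hR : N - d ≤ R) (hsum : d + S + R = M) (hc : c * N = M + (N - 1) * N) :
    d * d + S ≤ c * d := by
  have h₁ : N * (c * d - (d * d + S)) = N * (R - (N - d)) + (N - d) * (N * (d + 1) - M) := by
    linear_combination d * hc - N * hsum
  have h₂ : d * (M - N * (d + 1)) ≤ N * (c * d - (d * d + S)) := by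
    nlinarith [mul_le_mul_of_nonneg_left hS hN.le]
  rcases le_total 0 (N * (d + 1) - M) with hE | hE
  · nlinarith [mul_nonneg (sub_nonneg.2 hdN) hE]
  · nlinarith [mul_nonneg hd (neg_nonneg.2 hE)]

theorem mul_self_add_eq_iff_of_add_add_eq (hN : 0 < N) (hd : 0 < d) (hdN : d ≤ N)
    (hS : S ≤ d * N) (hR : N - d ≤ R) (hsum : d + S + R = M) (hc : c * N = M + (N - 1) * N) :
    d * d + S = c * d ↔ R = N - d ∧ (d = N ∨ N * (d + 1) = M) := by
  have h₁ : N * (c * d - (d * d + S)) = N * (R - (N - d)) + (N - d) * (N * (d + 1) - M) := by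
    linear_combination d * hc - N * hsum
  constructor
  · intro h
    have hE : 0 ≤ N * (d + 1) - M := by nlinarith [mul_le_mul_of_nonneg_left hS hN.le]
    have hA : 0 ≤ N * (R - (N - d)) := mul_nonneg hN.le (sub_nonneg.2 hR)
    have hB : 0 ≤ (N - d) * (N * (d + 1) - M) := mul_nonneg (sub_nonneg.2 hdN) hE
    rw [h, sub_self, mul_zero] at h₁
    refine ⟨by nlinarith, ?_⟩
    rcases mul_eq_zero.mp (show (N - d) * (N * (d + 1) - M) = 0 by linarith) with h | h
    · exact Or.inl (by linarith)
    · exact Or.inr (by linarith)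
  · rintro ⟨hR, rfl | hE⟩ <;> nlinarith

end RowBound

namespace SimpleGraph

section

variable {V : Type*} [Fintype V] {G : SimpleGraph V} [DecidableRel G.Adj]

theorem cast_degree_le_card_sub_one (v : V) : (G.degree v : ℝ) ≤ Fintype.card V - 1 := by
  rw [le_sub_iff_add_le]; exact_mod_cast G.degree_lt_card_verts v

theorem cast_degree_eq_card_sub_one_iff {v : V} :
    (G.degree v : ℝ) = Fintype.card V - 1 ↔ G.IsUniversal v := by
  rw [← degree_eq_card_sub_one, eq_sub_iff_add_eq, ← Nat.cast_add_one, Nat.cast_inj]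
  have := G.degree_lt_card_verts v
  omega

theorem cast_card_sub_one_pos (hdeg : ∀ v, 0 < G.degree v) (v : V) :
    (0 : ℝ) < Fintype.card V - 1 :=
  (Nat.cast_pos.mpr (hdeg v)).trans_le (G.cast_degree_le_card_sub_one v)

theorem div_card_sub_one_add_card_sub_two_mul_eq (hdeg : ∀ v, 0 < G.degree v) (v : V) :
    (2 * #G.edgeFinset / (Fintype.card V - 1) + Fintype.card V - 2 : ℝ) * (Fintype.card V - 1) =
      2 * #G.edgeFinset + (Fintype.card V - 1 - 1) * (Fintype.card V - 1) := by
  have := (cast_card_sub_one_pos hdeg v).ne'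
  field_simp
  ring

theorem sum_degree_neighborFinset_le (v : V) :
    ∑ w ∈ G.neighborFinset v, (G.degree w : ℝ) ≤ G.degree v * (Fintype.card V - 1) := by
  have := sum_le_card_nsmul _ _ _ fun w (_ : w ∈ G.neighborFinset v) =>
    G.cast_degree_le_card_sub_one w
  rwa [card_neighborFinset_eq_degree, nsmul_eq_mul] at this

variable [DecidableEq V]

theorem add_sum_neighborFinset_add_sum_compl {M : Type*} [AddCommMonoid M] (f : V → M) (v : V) :
    f v + ∑ w ∈ G.neighborFinset v, f w + ∑ w ∈ Gᶜ.neighborFinset v, f w = ∑ w, f w := by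
  rw [neighborFinset_compl, sdiff_singleton_eq_erase, add_right_comm,
    add_sum_erase _ _ (mem_compl.mpr (G.notMem_neighborFinset_self v)), add_comm,
    sum_add_sum_compl]

theorem degree_add_sum_add_sum_compl_eq (v : V) :
    (G.degree v : ℝ) + ∑ w ∈ G.neighborFinset v, (G.degree w : ℝ) +
      ∑ w ∈ Gᶜ.neighborFinset v, (G.degree w : ℝ) = 2 * #G.edgeFinset := by
  rw [add_sum_neighborFinset_add_sum_compl (fun w => (G.degree w : ℝ)), ← Nat.cast_sum,
    sum_degrees_eq_twice_card_edges]
  push_cast; rfl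

theorem cast_card_compl_neighborFinset (v : V) :
    ((Gᶜ.neighborFinset v).card : ℝ) = Fintype.card V - 1 - G.degree v := by
  rw [card_neighborFinset_eq_degree, degree_compl, Nat.cast_sub (Nat.le_sub_one_of_lt
    (G.degree_lt_card_verts v)), Nat.cast_pred (Fintype.card_pos_iff.mpr ⟨v⟩)]

theorem card_sub_one_sub_degree_le_sum_degree_compl (hdeg : ∀ v, 0 < G.degree v) (v : V) :
    Fintype.card V - 1 - G.degree v ≤ ∑ w ∈ Gᶜ.neighborFinset v, (G.degree w : ℝ) := by
  have := card_nsmul_le_sum (Gᶜ.neighborFinset v) (fun w => (G.degree w : ℝ)) 1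
    fun w _ => by exact_mod_cast hdeg w
  rwa [nsmul_one, cast_card_compl_neighborFinset] at this

theorem sum_degree_compl_eq_iff (hdeg : ∀ v, 0 < G.degree v) (v : V) :
    ∑ w ∈ Gᶜ.neighborFinset v, (G.degree w : ℝ) = Fintype.card V - 1 - G.degree v ↔
      ∀ w, Gᶜ.Adj v w → G.degree w = 1 := by
  rw [← cast_card_compl_neighborFinset, ← Nat.cast_sum, Nat.cast_inj, card_eq_sum_ones, eq_comm,
    sum_eq_sum_iff_of_le fun w _ => hdeg w]
  simp only [mem_neighborFinset, eq_comm]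

theorem degree_mul_degree_add_sum_le (hdeg : ∀ v, 0 < G.degree v) (v : V) :
    (G.degree v : ℝ) * G.degree v + ∑ w ∈ G.neighborFinset v, (G.degree w : ℝ) ≤
      (2 * #G.edgeFinset / (Fintype.card V - 1) + Fintype.card V - 2 : ℝ) * G.degree v :=
  mul_self_add_le_of_add_add_eq (cast_card_sub_one_pos hdeg v) (Nat.cast_nonneg _)
    (cast_degree_le_card_sub_one v) (sum_degree_neighborFinset_le v)
    (card_sub_one_sub_degree_le_sum_degree_compl hdeg v) (degree_add_sum_add_sum_compl_eq v)
    (div_card_sub_one_add_card_sub_two_mul_eq hdeg v)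

theorem degree_mul_degree_add_sum_eq_iff (hdeg : ∀ v, 0 < G.degree v) (v : V) :
    (G.degree v : ℝ) * G.degree v + ∑ w ∈ G.neighborFinset v, (G.degree w : ℝ) =
        (2 * #G.edgeFinset / (Fintype.card V - 1) + Fintype.card V - 2 : ℝ) * G.degree v ↔
      (∀ w, Gᶜ.Adj v w → G.degree w = 1) ∧
        (G.IsUniversal v ∨ (Fintype.card V - 1) * (G.degree v + 1) = 2 * #G.edgeFinset) := by
  rw [mul_self_add_eq_iff_of_add_add_eq (cast_card_sub_one_pos hdeg v)
    (Nat.cast_pos.mpr (hdeg v)) (cast_degree_le_card_sub_one v) (sum_degree_neighborFinset_le v)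
    (card_sub_one_sub_degree_le_sum_degree_compl hdeg v) (degree_add_sum_add_sum_compl_eq v)
    (div_card_sub_one_add_card_sub_two_mul_eq hdeg v), sum_degree_compl_eq_iff hdeg,
    cast_degree_eq_card_sub_one_iff, ← Nat.cast_pred (Fintype.card_pos_iff.mpr ⟨v⟩)]
  norm_cast

theorem isUniversal_of_degree_eq_one {w : V} (h1 : ∀ u ≠ w, G.degree u = 1)
    (hm : #G.edgeFinset + 1 = Fintype.card V) : G.IsUniversal w := by
  have hsum := G.sum_degrees_eq_twice_card_edges
  rw [← add_sum_erase _ _ (mem_univ w), sum_congr rfl fun u hu => h1 u (ne_of_mem_erase hu),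
    sum_const, card_erase_of_mem (mem_univ w), card_univ, smul_eq_mul, mul_one] at hsum
  rw [← degree_eq_card_sub_one]
  omega

theorem eq_starGraph_of_degree_eq_one {w : V} (hw : G.IsUniversal w)
    (h1 : ∀ u ≠ w, G.degree u = 1) : G = starGraph w := by
  ext a b
  rw [starGraph_adj]
  constructor
  · intro hab
    refine ⟨G.ne_of_adj hab, ?_⟩
    by_contra! h
    obtain ⟨u, -, hu⟩ := degree_eq_one_iff_existsUnique_adj.mp (h1 a h.1)
    exact h.2 ((hu b hab).trans (hu w (hw h.1.symm).symm).symm)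
  · rintro ⟨hab, rfl | rfl⟩
    · exact hw hab
    · exact (hw hab.symm).symm

theorem exists_eq_starGraph_of_not_isUniversal
    (h : ∀ v, (∀ w, Gᶜ.Adj v w → G.degree w = 1) ∧
      (G.IsUniversal v ∨ (Fintype.card V - 1) * (G.degree v + 1) = 2 * #G.edgeFinset))
    {v : V} (hv : ¬G.IsUniversal v) : ∃ r, G = starGraph r := by
  obtain ⟨z, hvz⟩ : ∃ z, Gᶜ.Adj v z := by simpa [IsUniversal, compl_adj] using hv
  -- `z` is a non-universal leaf, hence `m = n - 1`; every vertex but its neighbour `w` is a leaf.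
  have hz := (h v).1 z hvz
  have hm := (h z).2.resolve_left fun hu => hvz.2 (hu hvz.1.symm).symm
  rw [hz] at hm
  obtain ⟨w, -, hw⟩ := degree_eq_one_iff_existsUnique_adj.mp hz
  have h1 : ∀ u ≠ w, G.degree u = 1 := fun u huw => by
    by_cases huz : u = z
    · exact huz ▸ hz
    · exact (h z).1 u ((compl_adj G z u).mpr ⟨Ne.symm huz, fun hzu => huw (hw u hzu)⟩)
  have := G.degree_lt_card_verts z
  exact ⟨w, eq_starGraph_of_degree_eq_one (isUniversal_of_degree_eq_one h1 (by omega)) h1⟩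

theorem eq_top_or_exists_eq_starGraph_iff :
    (G = ⊤ ∨ ∃ r, G = starGraph r) ↔ ∀ v, (∀ w, Gᶜ.Adj v w → G.degree w = 1) ∧
      (G.IsUniversal v ∨ (Fintype.card V - 1) * (G.degree v + 1) = 2 * #G.edgeFinset) := by
  refine ⟨?_, fun h => ?_⟩
  · rintro (rfl | ⟨r, rfl⟩) v
    · simp [IsUniversal.top]
    have hdeg : ∀ w ≠ r, (starGraph r).degree w = 1 := fun w hw => by
      convert degree_starGraph_of_ne_center hw
    have hm : #(starGraph r).edgeFinset + 1 = Fintype.card V := by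
      convert (isTree_starGraph r).card_edgeFinset
    rcases eq_or_ne v r with rfl | hvr
    · exact ⟨fun w hw => (hw.2 (isUniversal_starGraph_self hw.1)).elim,
        Or.inl isUniversal_starGraph_self⟩
    refine ⟨fun w hw => hdeg w ?_, Or.inr ?_⟩
    · rintro rfl
      exact hw.2 (starGraph_center_adj' hw.1.symm)
    · rw [hdeg v hvr]
      omega
  · by_cases hall : ∀ v, G.IsUniversal v
    · exact Or.inl (eq_top_iff_forall_isUniversal.mpr hall)
    · obtain ⟨v, hv⟩ := not_forall.mp hall
      exact Or.inr (exists_eq_starGraph_of_not_isUniversal h hv)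

theorem signlessLaplacian_mulVec_degree_le (hdeg : ∀ v, 0 < G.degree v) :
    signlessLaplacian G *ᵥ (fun v => (G.degree v : ℝ)) ≤
      (2 * #G.edgeFinset / (Fintype.card V - 1) + Fintype.card V - 2 : ℝ) •
        fun v => (G.degree v : ℝ) := fun v => by
  rw [signlessLaplacian_mulVec_apply, Pi.smul_apply, smul_eq_mul]
  exact degree_mul_degree_add_sum_le hdeg v

theorem signlessLaplacian_mulVec_degree_eq_iff (hdeg : ∀ v, 0 < G.degree v) :
    signlessLaplacian G *ᵥ (fun v => (G.degree v : ℝ)) =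
        (2 * #G.edgeFinset / (Fintype.card V - 1) + Fintype.card V - 2 : ℝ) •
          (fun v => (G.degree v : ℝ)) ↔
      G = ⊤ ∨ ∃ r, G = starGraph r := by
  simp only [eq_top_or_exists_eq_starGraph_iff, funext_iff, signlessLaplacian_mulVec_apply,
    Pi.smul_apply, smul_eq_mul, degree_mul_degree_add_sum_eq_iff hdeg]

end

theorem comap_completeBipartiteGraph_eq_starGraph {V β : Type*} (f : V ≃ Fin 1 ⊕ β) :
    (completeBipartiteGraph (Fin 1) β).comap f = starGraph (f.symm (.inl 0)) := by
  have hleft : ∀ a, (f a).isLeft ↔ a = f.symm (.inl 0) := fun a => by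
    rw [Equiv.eq_symm_apply]
    rcases f a with i | i <;> simp [Fin.fin_one_eq_zero]
  ext a b
  simp only [comap_adj, completeBipartiteGraph, starGraph_adj, ← Sum.not_isLeft, hleft]
  grind

theorem nonempty_iso_completeBipartiteGraph_iff {V : Type*} [Fintype V] [DecidableEq V]
    {G : SimpleGraph V} :
    Nonempty (G ≃g completeBipartiteGraph (Fin 1) (Fin (Fintype.card V - 1))) ↔
      ∃ r, G = starGraph r := by
  constructor
  · rintro ⟨φ⟩
    refine ⟨_, (SimpleGraph.ext ?_).trans (comap_completeBipartiteGraph_eq_starGraph φ.toEquiv)⟩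
    ext a b
    exact φ.map_adj_iff.symm
  · rintro ⟨r, rfl⟩
    obtain ⟨e⟩ : Nonempty (V ≃ Fin 1 ⊕ Fin (Fintype.card V - 1)) := by
      refine Fintype.card_eq.mp ?_
      simp only [Fintype.card_sum, Fintype.card_fin]
      have := Fintype.card_pos_iff.mpr ⟨r⟩
      omega
    let f := (Equiv.swap r (e.symm (.inl 0))).trans e
    have hf : f.symm (.inl 0) = r := by simp [f]
    rw [← hf, ← comap_completeBipartiteGraph_eq_starGraph]
    exact ⟨Iso.comap f _⟩

end SimpleGraph

/-- For a connected graph of order `n ≥ 2` and size `m`,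
`q(G) ≤ 2m/(n−1) + n − 2`, with equality iff `G = K_n` or `G ≅ K_{1,n−1}`. -/
theorem qSpectralRadius_le {V : Type*} [Fintype V] [DecidableEq V]
    (G : SimpleGraph V) [DecidableRel G.Adj] (n m : ℕ)
    (hn : n = Fintype.card V) (hn2 : 2 ≤ n) (hm : m = G.edgeFinset.card)
    (hconn : G.Connected) :
    qSpectralRadius G ≤ 2 * m / (n - 1) + n - 2 ∧
      (qSpectralRadius G = 2 * m / (n - 1) + n - 2 ↔
        G = ⊤ ∨ Nonempty (G ≃g completeBipartiteGraph (Fin 1) (Fin (n - 1)))) := by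
  subst hn hm
  have : Nontrivial V := Fintype.one_lt_card_iff_nontrivial.mp hn2
  have hdeg : ∀ v, 0 < G.degree v := fun v => hconn.preconnected.degree_pos_of_nontrivial v
  have hd : ∀ v, (0 : ℝ) < G.degree v := fun v => Nat.cast_pos.mpr (hdeg v)
  have hrow := signlessLaplacian_mulVec_degree_le hdeg
  refine ⟨qSpectralRadius_le_of_mulVec_le hd hrow, ?_⟩
  rw [qSpectralRadius_eq_iff hconn hd hrow, signlessLaplacian_mulVec_degree_eq_iff hdeg,
    nonempty_iso_completeBipartiteGraph_iff]
end

section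
/- Let G be a graph of order n with non-decreasing degree sequence d_1 ≤ ... ≤ d_n, let t be a positive integer, and suppose there exists an integer k with t ≤ k < n/2 such that d_k ≤ k and d_{n−k+t} ≤ n − k − 1. Then the number of edges m satisfies 2m ≤ k² + (n − 2k + t)(n − k − 1) + (k − t)(n − 1). -/
open SimpleGraph

/-- If the non-decreasing degree sequence `d_1 ≤ ... ≤ d_n` of a graph `G`
(given by the ordering equivalence `f`) satisfies `d_k ≤ k` and
`d_{n-k+t} ≤ n - k - 1` for some `t ≤ k < n/2` with `t ≥ 1`, then
`2m ≤ k² + (n − 2k + t)(n − k − 1) + (k − t)(n − 1)`. -/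
theorem degree_sum_bound (n t k : ℕ) (G : SimpleGraph (Fin n)) [DecidableRel G.Adj]
    (f : Fin n ≃ Fin n)
    (hmono : ∀ i j : Fin n, i ≤ j → G.degree (f i) ≤ G.degree (f j))
    (ht : 1 ≤ t) (htk : t ≤ k) (hk : 2 * k < n)
    (hdk : G.degree (f ⟨k - 1, by omega⟩) ≤ k)
    (hdnk : G.degree (f ⟨n - k + t - 1, by omega⟩) ≤ n - k - 1) :
    2 * (G.edgeFinset.card : ℤ) ≤
      (k : ℤ) ^ 2 + ((n : ℤ) - 2 * k + t) * ((n : ℤ) - k - 1)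
        + ((k : ℤ) - t) * ((n : ℤ) - 1) := by
  have key : ∑ v, G.degree v = 2 * G.edgeFinset.card := G.sum_degrees_eq_twice_card_edges
  set g : ℕ → ℕ := fun i => if i < k then k else if i < n - k + t then n - k - 1 else n - 1
    with hg
  have hbound : ∀ i : Fin n, G.degree (f i) ≤ g i.val := by
    intro i
    by_cases h1 : i.val < k
    · simp only [hg, if_pos h1]
      exact le_trans (hmono i ⟨k - 1, by omega⟩ (by simp [Fin.le_def]; omega)) hdk
    · by_cases h2 : i.val < n - k + t
      · simp only [hg, if_neg h1, if_pos h2]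
        exact le_trans (hmono i ⟨n - k + t - 1, by omega⟩ (by simp [Fin.le_def]; omega)) hdnk
      · simp only [hg, if_neg h1, if_neg h2]
        have hd := G.degree_lt_card_verts (f i)
        simp only [Fintype.card_fin] at hd
        omega
  have heq : ∑ v, G.degree v = ∑ i : Fin n, G.degree (f i) := (Equiv.sum_comp f _).symm
  have hsum : ∑ i : Fin n, G.degree (f i) ≤ ∑ i ∈ Finset.range n, g i := by
    rw [← Fin.sum_univ_eq_sum_range]
    exact Finset.sum_le_sum fun i _ => hbound i
  have hsplit : ∑ i ∈ Finset.range n, g i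
      = ∑ i ∈ Finset.Ico 0 k, g i + ∑ i ∈ Finset.Ico k (n - k + t), g i
        + ∑ i ∈ Finset.Ico (n - k + t) n, g i := by
    rw [Finset.sum_Ico_consecutive _ (by omega : 0 ≤ k) (by omega : k ≤ n - k + t),
      Finset.sum_Ico_consecutive _ (by omega : 0 ≤ n - k + t) (by omega : n - k + t ≤ n)]
    rw [Finset.range_eq_Ico]
  have h1 : ∑ i ∈ Finset.Ico 0 k, g i = k * k := by
    have hc : ∀ i ∈ Finset.Ico 0 k, g i = k := fun i hi => by
      simp only [Finset.mem_Ico] at hi; simp only [hg, if_pos hi.2]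
    rw [Finset.sum_congr rfl hc, Finset.sum_const, Nat.card_Ico, smul_eq_mul, Nat.sub_zero]
  have h2 : ∑ i ∈ Finset.Ico k (n - k + t), g i = (n - 2 * k + t) * (n - k - 1) := by
    have hc : ∀ i ∈ Finset.Ico k (n - k + t), g i = n - k - 1 := fun i hi => by
      simp only [Finset.mem_Ico] at hi
      simp only [hg, if_neg (by omega : ¬ i < k), if_pos hi.2]
    rw [Finset.sum_congr rfl hc, Finset.sum_const, Nat.card_Ico, smul_eq_mul]; congr 1; omega
  have h3 : ∑ i ∈ Finset.Ico (n - k + t) n, g i = (k - t) * (n - 1) := by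
    have hc : ∀ i ∈ Finset.Ico (n - k + t) n, g i = n - 1 := fun i hi => by
      simp only [Finset.mem_Ico] at hi
      simp only [hg, if_neg (by omega : ¬ i < k), if_neg (by omega : ¬ i < n - k + t)]
    rw [Finset.sum_congr rfl hc, Finset.sum_const, Nat.card_Ico, smul_eq_mul]; congr 1; omega
  have hnat : 2 * G.edgeFinset.card ≤ k * k + (n - 2 * k + t) * (n - k - 1) + (k - t) * (n - 1) := by
    omega
  have hcast : ((2 * G.edgeFinset.card : ℕ) : ℤ)
      ≤ ((k * k + (n - 2 * k + t) * (n - k - 1) + (k - t) * (n - 1) : ℕ) : ℤ) := by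
    exact_mod_cast hnat
  push_cast [Nat.cast_sub (by omega : 2 * k ≤ n), Nat.cast_sub (by omega : k ≤ n),
    Nat.cast_sub (by omega : 1 ≤ n - k), Nat.cast_sub htk,
    Nat.cast_sub (by omega : 1 ≤ n)] at hcast
  nlinarith [hcast]
end
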